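/- There is a well-defined surjective k-algebra homomorphism from the S_n-invariant part of the Milnor ring of F_{k,n} onto the Milnor ring of G_{k,n}, i.e. J_{F_{k,n}}^{S_n} ↠ J_{G_{k,n}}, induced by the identification k[x]^{S_n} ≅ k[y], y_j = σ_j(x). -/

import Mathlib

open MvPolynomial

noncomputable def milnorIdeal (K : Type) [Field K] (n k : ℕ) : Ideal (MvPolynomial (Fin n) K) :=
  Ideal.span (Set.range fun i : Fin n => (X i : MvPolynomial (Fin n) K) ^ (k - 1))

noncomputable abbrev MilnorRing (K : Type) [Field K] (n k : ℕ) :=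
  MvPolynomial (Fin n) K ⧸ milnorIdeal K n k

noncomputable def permAct (K : Type) [Field K] (n k : ℕ) (σ : Equiv.Perm (Fin n)) :
    MilnorRing K n k →ₐ[K] MilnorRing K n k :=
  Ideal.Quotient.liftₐ (milnorIdeal K n k)
    ((Ideal.Quotient.mkₐ K (milnorIdeal K n k)).comp (rename σ)) (by
      intro a ha
      simp only [AlgHom.comp_apply, Ideal.Quotient.mkₐ_eq_mk]
      rw [Ideal.Quotient.eq_zero_iff_mem]
      have hmap : (milnorIdeal K n k).map (rename (R := K) σ) ≤ milnorIdeal K n k := by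
        rw [milnorIdeal, Ideal.map_span]
        apply Ideal.span_le.2
        rintro _ ⟨_, ⟨i, rfl⟩, rfl⟩
        simp only [map_pow, rename_X]
        exact Ideal.subset_span ⟨σ i, rfl⟩
      exact hmap (Ideal.mem_map_of_mem _ ha))

noncomputable def vandermonde (K : Type) [Field K] (n : ℕ) : MvPolynomial (Fin n) K :=
  ∏ i : Fin n, ∏ j ∈ Finset.Ioi i, (X i - X j)

noncomputable def antisym (K : Type) [Field K] (n k : ℕ) : Submodule K (MilnorRing K n k) :=
  ⨅ σ : Equiv.Perm (Fin n),
    Module.End.eigenspace (permAct K n k σ).toLinearMap ((Equiv.Perm.sign σ : ℤ) : K)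

noncomputable def invSubalg (K : Type) [Field K] (n k : ℕ) : Subalgebra K (MilnorRing K n k) where
  carrier := {a | ∀ σ, permAct K n k σ a = a}
  mul_mem' := fun ha hb => fun σ => by rw [map_mul, ha σ, hb σ]
  add_mem' := fun ha hb => fun σ => by rw [map_add, ha σ, hb σ]
  one_mem' := fun σ => map_one _
  zero_mem' := fun σ => map_zero _
  algebraMap_mem' := fun r σ => (permAct K n k σ).commutes r

/-! Let `φ : K[y] → K[x]` send `y_j` to `σ_j`. The map `q ↦ [φ q]` from `K[y]` to the invariants of
`J_F` is onto, because averaging over `S_n` (possible in characteristic `0`) turns a representative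
of an invariant class into a symmetric polynomial, which lies in the image of `φ`. Its kernel lies in
the Jacobian ideal `J` of `G`: the chain rule applied to `φ G = F` gives
`k x_i^(k-1) = ∑_j φ(∂_j G) ∂_i σ_j`, so the ideal of `J_F` lies in the extension `φ(J) K[x]`, and
averaging the coefficients of a combination shows that this extension contracts to `J`. Hence
`q ↦ [q]` descends to the invariants. -/

theorem inv_card_smul_sum_const {K G M : Type*} [DivisionRing K] [CharZero K] [Fintype G]
    [Nonempty G] [AddCommGroup M] [Module K M] (m : M) :
    (Fintype.card G : K)⁻¹ • ∑ _g : G, m = m := by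
  rw [Finset.sum_const, Finset.card_univ, ← Nat.cast_smul_eq_nsmul K, smul_smul,
    inv_mul_cancel₀ (Nat.cast_ne_zero.2 Fintype.card_ne_zero), one_smul]

namespace MvPolynomial

section PDeriv

variable {R σ τ : Type*} [CommSemiring R]

theorem pderiv_aeval [Fintype σ] (f : σ → MvPolynomial τ R) (i : τ) (p : MvPolynomial σ R) :
    pderiv i (aeval f p) = ∑ j, aeval f (pderiv j p) * pderiv i (f j) := by
  classical
  induction p using MvPolynomial.induction_on with
  | C r => simp
  | add p q hp hq => simp only [map_add, hp, hq, add_mul, Finset.sum_add_distrib]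
  | mul_X p j hp =>
    simp only [map_mul, aeval_X, pderiv_mul, hp, map_add, add_mul, Finset.sum_add_distrib,
      Finset.sum_mul, pderiv_X, Pi.single_apply]
    simp [mul_right_comm, add_comm]

variable (R) in
noncomputable def jacobianIdeal (G : MvPolynomial σ R) : Ideal (MvPolynomial σ R) :=
  Ideal.span (Set.range fun j => pderiv j G)

end PDeriv

section Symmetrize

variable {K σ : Type*} [Field K] [Fintype σ] [DecidableEq σ]

variable (K σ) in
noncomputable def symmetrize : MvPolynomial σ K →ₗ[K] MvPolynomial σ K :=
  (Fintype.card (Equiv.Perm σ) : K)⁻¹ • ∑ e : Equiv.Perm σ, (rename e).toLinearMap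

theorem symmetrize_apply (p : MvPolynomial σ K) :
    symmetrize K σ p = (Fintype.card (Equiv.Perm σ) : K)⁻¹ • ∑ e : Equiv.Perm σ, rename e p := by
  simp [symmetrize]

theorem isSymmetric_symmetrize (p : MvPolynomial σ K) : (symmetrize K σ p).IsSymmetric := by
  intro e
  rw [symmetrize_apply, map_smul, map_sum]
  congr 1
  refine Fintype.sum_equiv (Equiv.mulLeft e) _ _ fun e' => ?_
  simp [rename_rename, Equiv.Perm.coe_mul]

theorem symmetrize_mul_of_isSymmetric (p : MvPolynomial σ K) {s : MvPolynomial σ K}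
    (hs : s.IsSymmetric) : symmetrize K σ (p * s) = symmetrize K σ p * s := by
  simp only [symmetrize_apply, map_mul, hs _, ← Finset.sum_mul, smul_mul_assoc]

theorem symmetrize_of_isSymmetric [CharZero K] {s : MvPolynomial σ K} (hs : s.IsSymmetric) :
    symmetrize K σ s = s := by
  simp only [symmetrize_apply, hs _, inv_card_smul_sum_const]

end Symmetrize

section Esymm

variable {σ : Type*} [Fintype σ] {n : ℕ}

theorem isSymmetric_aeval_esymm {R : Type*} [CommSemiring R] (q : MvPolynomial (Fin n) R) :
    (aeval (fun j : Fin n => esymm σ R (j + 1)) q).IsSymmetric := by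
  rw [← esymmAlgHom_apply]
  exact (esymmAlgHom σ R n q).2

theorem exists_aeval_esymm_eq {R : Type*} [CommRing R] (hn : Fintype.card σ ≤ n)
    {p : MvPolynomial σ R} (hp : p.IsSymmetric) :
    ∃ q : MvPolynomial (Fin n) R, aeval (fun j : Fin n => esymm σ R (j + 1)) q = p := by
  obtain ⟨q, hq⟩ := esymmAlgHom_surjective R hn ⟨p, (mem_symmetricSubalgebra p).2 hp⟩
  exact ⟨q, by rw [← esymmAlgHom_apply, hq]⟩

theorem aeval_esymm_injective {R : Type*} [CommRing R] (hn : n ≤ Fintype.card σ) :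
    Function.Injective (aeval (R := R) fun j : Fin n => esymm σ R (j + 1)) := by
  intro p q h
  refine esymmAlgHom_injective R hn (Subtype.ext ?_)
  simpa only [esymmAlgHom_apply] using h

theorem comap_map_aeval_esymm {K : Type*} [Field K] [CharZero K] [DecidableEq σ] (hn : Fintype.card σ = n)
    (I : Ideal (MvPolynomial (Fin n) K)) :
    (I.map (aeval fun j : Fin n => esymm σ K (j + 1))).comap
      (aeval fun j : Fin n => esymm σ K (j + 1)) = I := by
  set φ : MvPolynomial (Fin n) K →ₐ[K] MvPolynomial σ K := aeval fun j => esymm σ K (j + 1)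
  refine le_antisymm (fun q hq => ?_) Ideal.le_comap_map
  -- The factor `c` makes the statement stable under multiplication, so span induction applies.
  suffices key : ∀ s ∈ I.map φ, ∀ c, ∃ a ∈ I, φ a = symmetrize K σ (c * s) by
    obtain ⟨a, ha, hφa⟩ := key _ hq 1
    rw [one_mul, symmetrize_of_isSymmetric (isSymmetric_aeval_esymm q)] at hφa
    rwa [← aeval_esymm_injective hn.ge hφa]
  intro s hs
  rw [Ideal.map, Ideal.span] at hs
  induction hs using Submodule.span_induction with
  | mem _ hs =>
    obtain ⟨b, hb, rfl⟩ := hs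
    intro c
    obtain ⟨t, ht⟩ := exists_aeval_esymm_eq hn.le (isSymmetric_symmetrize c)
    refine ⟨t * b, I.mul_mem_left t hb, ?_⟩
    rw [symmetrize_mul_of_isSymmetric c (isSymmetric_aeval_esymm b), map_mul, ht]
  | zero => exact fun c => ⟨0, I.zero_mem, by simp⟩
  | add s₁ s₂ _ _ h₁ h₂ =>
    intro c
    obtain ⟨a₁, ha₁, e₁⟩ := h₁ c
    obtain ⟨a₂, ha₂, e₂⟩ := h₂ c
    exact ⟨a₁ + a₂, I.add_mem ha₁ ha₂, by rw [map_add, e₁, e₂, mul_add, map_add]⟩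
  | smul d s _ h =>
    intro c
    simpa only [smul_eq_mul, mul_assoc] using h (c * d)

end Esymm

end MvPolynomial

section Milnor

variable {K : Type} [Field K] {n k : ℕ}

theorem permAct_mk (e : Equiv.Perm (Fin n)) (p : MvPolynomial (Fin n) K) :
    permAct K n k e (Ideal.Quotient.mk (milnorIdeal K n k) p) =
      Ideal.Quotient.mk (milnorIdeal K n k) (rename e p) :=
  rfl

theorem milnorIdeal_le_map_jacobianIdeal [CharZero K] (hk : k ≠ 0) {G : MvPolynomial (Fin n) K}
    (hG : aeval (fun j : Fin n => esymm (Fin n) K (j + 1)) G = ∑ i : Fin n, X i ^ k) :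
    milnorIdeal K n k ≤
      (jacobianIdeal K G).map (aeval fun j : Fin n => esymm (Fin n) K (j + 1)) := by
  rw [milnorIdeal, Ideal.span_le]
  rintro _ ⟨i, rfl⟩
  have hchain : C (k : K) * X i ^ (k - 1) = ∑ j, aeval (fun j : Fin n => esymm (Fin n) K (j + 1))
      (pderiv j G) * pderiv i (esymm (Fin n) K (j + 1)) := by
    rw [← pderiv_aeval, hG, map_sum, Finset.sum_eq_single_of_mem i (Finset.mem_univ i)
      fun j _ hji => by rw [pderiv_pow, pderiv_X_of_ne hji, mul_zero]]
    rw [pderiv_pow, pderiv_X_self, mul_one, C_eq_coe_nat]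
  have hmem : C (k : K) * X i ^ (k - 1) ∈
      (jacobianIdeal K G).map (aeval fun j : Fin n => esymm (Fin n) K (j + 1)) := by
    rw [hchain]
    exact Ideal.sum_mem _ fun j _ =>
      Ideal.mul_mem_right _ _ (Ideal.mem_map_of_mem _ (Ideal.subset_span ⟨j, rfl⟩))
  exact (Ideal.unit_mul_mem_iff_mem _ ((Nat.cast_ne_zero.2 hk).isUnit.map C)).1 hmem

theorem exists_aeval_esymm_mk_eq [CharZero K] {a : MilnorRing K n k}
    (ha : a ∈ invSubalg K n k) : ∃ q : MvPolynomial (Fin n) K,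
      Ideal.Quotient.mk (milnorIdeal K n k) (aeval (fun j : Fin n => esymm (Fin n) K (j + 1)) q)
        = a := by
  obtain ⟨p, rfl⟩ := Ideal.Quotient.mk_surjective a
  obtain ⟨q, hq⟩ := exists_aeval_esymm_eq (Fintype.card_fin n).le (isSymmetric_symmetrize p)
  refine ⟨q, ?_⟩
  rw [hq, symmetrize_apply, ← Ideal.Quotient.mkₐ_eq_mk K, map_smul, map_sum]
  simp only [Ideal.Quotient.mkₐ_eq_mk, ← permAct_mk, ha _, inv_card_smul_sum_const]

variable (K n k) in
noncomputable def esymmInvSubalgHom : MvPolynomial (Fin n) K →ₐ[K] invSubalg K n k :=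
  ((Ideal.Quotient.mkₐ K (milnorIdeal K n k)).comp
    (aeval fun j : Fin n => esymm (Fin n) K (j + 1))).codRestrict (invSubalg K n k)
    fun q e => by
      rw [AlgHom.comp_apply, Ideal.Quotient.mkₐ_eq_mk, permAct_mk, isSymmetric_aeval_esymm q e]

theorem coe_esymmInvSubalgHom (q : MvPolynomial (Fin n) K) :
    (esymmInvSubalgHom K n k q : MilnorRing K n k) =
      Ideal.Quotient.mk (milnorIdeal K n k) (aeval (fun j : Fin n => esymm (Fin n) K (j + 1)) q) :=
  rfl

theorem esymmInvSubalgHom_surjective [CharZero K] :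
    Function.Surjective (esymmInvSubalgHom K n k) := fun a => by
  obtain ⟨q, hq⟩ := exists_aeval_esymm_mk_eq a.2
  exact ⟨q, Subtype.ext hq⟩

theorem ker_esymmInvSubalgHom_le [CharZero K] (hk : k ≠ 0) {G : MvPolynomial (Fin n) K}
    (hG : aeval (fun j : Fin n => esymm (Fin n) K (j + 1)) G = ∑ i : Fin n, X i ^ k) :
    RingHom.ker (esymmInvSubalgHom K n k) ≤ jacobianIdeal K G := fun q hq => by
  have hmilnor : aeval (fun j : Fin n => esymm (Fin n) K (j + 1)) q ∈ milnorIdeal K n k := by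
    rw [← Ideal.Quotient.eq_zero_iff_mem, ← coe_esymmInvSubalgHom, RingHom.mem_ker.1 hq]
    rfl
  rw [← comap_map_aeval_esymm (Fintype.card_fin n) (jacobianIdeal K G)]
  exact milnorIdeal_le_map_jacobianIdeal hk hG hmilnor

end Milnor

/-- There is a surjective `K`-algebra homomorphism from the `S_n`-invariant part of the
Milnor ring of `F_{k,n}` onto the Milnor ring of `G_{k,n}`, sending the class of a
symmetric polynomial `q(σ(x))` to the class of `q(y)`. -/
theorem invariants_surject_onto_milnor_G (K : Type) [Field K] [CharZero K] (n k : ℕ)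
    (hk : n < k) (G : MvPolynomial (Fin n) K)
    (hG : aeval (fun j : Fin n => esymm (Fin n) K ((j : ℕ) + 1)) G
        = ∑ i : Fin n, X i ^ k) :
    ∃ ψ : invSubalg K n k →ₐ[K]
        (MvPolynomial (Fin n) K ⧸ Ideal.span (Set.range fun j : Fin n => pderiv j G)),
      Function.Surjective ψ ∧
        ∀ (q : MvPolynomial (Fin n) K) (a : invSubalg K n k),
          (a : MilnorRing K n k) =
              Ideal.Quotient.mk (milnorIdeal K n k)
                (aeval (fun j : Fin n => esymm (Fin n) K ((j : ℕ) + 1)) q) →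
            ψ a = Ideal.Quotient.mk
              (Ideal.span (Set.range fun j : Fin n => pderiv j G)) q := by
  have hker := ker_esymmInvSubalgHom_le (k := k) (by omega) hG
  rw [← Ideal.Quotient.mkₐ_ker K (jacobianIdeal K G)] at hker
  refine ⟨(esymmInvSubalgHom K n k).liftOfSurjective esymmInvSubalgHom_surjective
      (Ideal.Quotient.mkₐ K (jacobianIdeal K G)) hker,
    AlgHom.liftOfSurjective_surjective _ _ _ _ (Ideal.Quotient.mkₐ_surjective K _),
    fun q a ha => ?_⟩
  obtain rfl : esymmInvSubalgHom K n k q = a := Subtype.ext ha.symm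
  exact AlgHom.liftOfSurjective_apply _ _ _ _ q
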